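/- In the group algebra Q[S_{n+1}], for 0 <= k <= n the element x_{n-k} (sum of all w with w(1) < ... < w(n-k+1)) equals the falling factorial prod_{i=0}^{k-1} (x_{n-1} - i), where x_{n-1} is the sum of all w with w(1) < ... < w(n). -/

import Mathlib

/-- In the group algebra `ℚ[S_N]` (permutations of `{0, 1, ..., N-1}`, corresponding to
`{1, ..., N}` in one-based indexing), `xA N j` is the sum of all permutations `w` with
`w 0 < w 1 < ... < w j`, i.e. the minimal-length left coset representatives of the
parabolic subgroup generated by the adjacent transpositions `s_1, ..., s_j`. -/
noncomputable def xA (N j : ℕ) : MonoidAlgebra ℚ (Equiv.Perm (Fin N)) :=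
  ∑ w ∈ Finset.univ.filter
      (fun w : Equiv.Perm (Fin N) => ∀ a b : Fin N, a < b → (b : ℕ) ≤ j → w a < w b),
    MonoidAlgebra.single w 1

/-!
Write `c m` for the cycle `(m m+1 … n)`, i.e. `Fin.cycleIcc m (Fin.last n)`: in one-line
notation, `u * c m` is `u` with its entry in position `m` moved to the end. A permutation
increasing on `0, …, n-1` is determined by its last value `m`, and it is `c m`; hence
`x_{n-1} = ∑ m, c m`. Now let `u 0 < ⋯ < u (j+1)`. For `m > j + 1` the product `u * c m` has the
same increasing prefix, which contributes `(n - j - 1) x_{j+1}`. For `m ≤ j + 1` every `w` with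
`w 0 < ⋯ < w j` arises exactly once: `m` is the position at which `w n` has to be inserted into
that prefix. So `x_{j+1} x_{n-1} = x_j + (n - j - 1) x_{j+1}`, i.e.
`x_j = x_{j+1} (x_{n-1} - (n - j - 1))`, and the falling factorial follows by induction from
`x_n = 1`.
-/

open Finset MonoidAlgebra Fin

def increasingUpTo (N j : ℕ) : Finset (Equiv.Perm (Fin N)) :=
  {w | StrictMonoOn w {i | (i : ℕ) ≤ j}}

lemma mem_increasingUpTo {N j : ℕ} {w : Equiv.Perm (Fin N)} :
    w ∈ increasingUpTo N j ↔ StrictMonoOn w {i | (i : ℕ) ≤ j} := by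
  simp [increasingUpTo]

lemma xA_eq_sum (N j : ℕ) : xA N j = ∑ w ∈ increasingUpTo N j, single w 1 := by
  refine sum_congr (filter_congr fun w _ => ?_) fun _ _ => rfl
  exact ⟨fun h a ha b hb hab => h a b hab hb,
    fun h a b hab hb => h ((Nat.le_of_lt hab).trans hb) hb hab⟩

section
variable {n : ℕ}

lemma xA_self : xA (n + 1) n = 1 := by
  have hS : {i : Fin (n + 1) | (i : ℕ) ≤ n} = Set.univ :=
    Set.eq_univ_of_forall fun i => Nat.lt_succ_iff.1 i.isLt
  have hX : increasingUpTo (n + 1) n = {1} := by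
    ext w
    rw [mem_increasingUpTo, hS, strictMonoOn_univ, mem_singleton]
    refine ⟨fun hw => ?_, fun hw => hw ▸ strictMono_id⟩
    exact Equiv.ext <| congrFun <| (hw.range_inj strictMono_id).1 <| by
      rw [w.surjective.range_eq, Set.range_id]
  rw [xA_eq_sum, hX, sum_singleton, one_def]

lemma cycleIcc_last_apply_last (m : Fin (n + 1)) : cycleIcc m (last n) (last n) = m :=
  cycleIcc_of_last (le_last m)

lemma cycleIcc_last_apply_castSucc (m : Fin (n + 1)) (i : Fin n) :
    cycleIcc m (last n) (castSucc i) = m.succAbove i := by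
  simpa using congrFun (cycleIcc_comp_succAbove m (last n) (le_last m)) i

lemma val_succAbove_le_succ_iff {j : ℕ} {m : Fin (n + 1)} (hm : (m : ℕ) ≤ j + 1) (a : Fin n) :
    (m.succAbove a : ℕ) ≤ j + 1 ↔ (a : ℕ) ≤ j := by
  unfold succAbove
  split_ifs with h
  all_goals simp only [lt_def, val_castSucc] at h; simp only [val_castSucc, val_succ]; omega

section
variable {α : Type*} [Preorder α]

lemma strictMonoOn_castSucc_iff {j : ℕ} (hj : j < n) {v : Fin (n + 1) → α} :
    StrictMonoOn v {i | (i : ℕ) ≤ j} ↔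
      StrictMonoOn (v ∘ castSucc) {i : Fin n | (i : ℕ) ≤ j} := by
  refine ⟨fun h => h.comp (strictMono_castSucc.strictMonoOn _) fun i hi => hi,
    fun h a ha b hb hab => ?_⟩
  simpa using h (a := a.castLT (lt_of_le_of_lt ha hj)) (b := b.castLT (lt_of_le_of_lt hb hj))
    ha hb hab

/-- `w (last n)` fits between positions `m - 1` and `m` of `w 0 < ⋯ < w j`. -/
def IsInsertionPoint (j : ℕ) (w : Fin (n + 1) → α) (m : Fin (n + 1)) : Prop :=
  ∀ a : Fin n, (a : ℕ) ≤ j →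
    (castSucc a < m → w (castSucc a) < w (last n)) ∧
      (m ≤ castSucc a → w (last n) < w (castSucc a))

lemma IsInsertionPoint.le {j : ℕ} {w : Fin (n + 1) → α} {m m' : Fin (n + 1)}
    (hm : IsInsertionPoint j w m) (hm' : IsInsertionPoint j w m') (hj : (m : ℕ) ≤ j + 1) :
    m ≤ m' := by
  by_contra! hlt
  obtain ⟨a, rfl⟩ : ∃ a : Fin n, castSucc a = m' :=
    ⟨m'.castLT (lt_of_lt_of_le hlt (le_last m)), castSucc_castLT _ _⟩
  have ha : (a : ℕ) ≤ j := by have := lt_def.1 hlt; simp only [val_castSucc] at this; omega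
  exact lt_asymm ((hm a ha).1 hlt) ((hm' a ha).2 le_rfl)

lemma strictMonoOn_iff_comp_cycleIcc {j : ℕ} (hj : j < n) {m : Fin (n + 1)}
    (hm : (m : ℕ) ≤ j + 1) {u : Fin (n + 1) → α} :
    StrictMonoOn u {i | (i : ℕ) ≤ j + 1} ↔
      StrictMonoOn (u ∘ cycleIcc m (last n)) {i | (i : ℕ) ≤ j} ∧
        IsInsertionPoint j (u ∘ cycleIcc m (last n)) m := by
  have hcomp : (u ∘ cycleIcc m (last n)) ∘ castSucc = u ∘ m.succAbove :=
    funext fun i => congrArg u (cycleIcc_last_apply_castSucc m i)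
  have hS := val_succAbove_le_succ_iff hm
  rw [strictMonoOn_castSucc_iff hj, hcomp]
  simp only [IsInsertionPoint, Function.comp_apply, cycleIcc_last_apply_castSucc,
    cycleIcc_last_apply_last]
  constructor
  · intro hu
    refine ⟨hu.comp ((strictMono_succAbove m).strictMonoOn _) fun a ha => (hS a).2 ha,
      fun a ha => ⟨fun h => hu ((hS a).2 ha) hm ((succAbove_lt_iff_castSucc_lt _ _).2 h),
        fun h => hu hm ((hS a).2 ha) ((lt_succAbove_iff_le_castSucc _ _).2 h)⟩⟩
  · rintro ⟨hmono, hins⟩ a ha b hb hab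
    cases a using succAboveCases m with
    | x =>
      cases b using succAboveCases m with
      | x => exact absurd hab (lt_irrefl _)
      | p b => exact (hins b ((hS b).1 hb)).2 ((lt_succAbove_iff_le_castSucc _ _).1 hab)
    | p a =>
      cases b using succAboveCases m with
      | x => exact (hins a ((hS a).1 ha)).1 ((succAbove_lt_iff_castSucc_lt _ _).1 hab)
      | p b => exact hmono ((hS a).1 ha) ((hS b).1 hb) ((strictMono_succAbove m).lt_iff_lt.1 hab)

end

lemma exists_isInsertionPoint {α : Type*} [LinearOrder α] {j : ℕ} (hj : j < n)
    {w : Fin (n + 1) → α} (hinj : Function.Injective w)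
    (hw : StrictMonoOn w {i | (i : ℕ) ≤ j}) :
    ∃ m : Fin (n + 1), (m : ℕ) ≤ j + 1 ∧ IsInsertionPoint j w m := by
  let T : Finset (Fin (n + 1)) := {i | j < (i : ℕ) ∨ w (last n) < w i}
  have hT : (⟨j + 1, by omega⟩ : Fin (n + 1)) ∈ T := by simp [T]
  refine ⟨T.min' ⟨_, hT⟩, T.min'_le _ hT, fun a ha => ⟨fun hlt => ?_, fun hle => ?_⟩⟩
  · have hnot : castSucc a ∉ T := fun h => (T.min'_le _ h).not_gt hlt
    simp only [T, mem_filter, mem_univ, true_and, not_or, not_lt] at hnot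
    exact lt_of_le_of_ne hnot.2 (hinj.ne (castSucc_ne_last a))
  · have hmin := T.min'_mem ⟨_, hT⟩
    simp only [T, mem_filter, mem_univ, true_and] at hmin
    have hmin_le : (T.min' ⟨_, hT⟩ : ℕ) ≤ j := (le_def.1 hle).trans ha
    exact (hmin.resolve_left hmin_le.not_gt).trans_le (hw.monotoneOn hmin_le ha hle)

lemma mem_increasingUpTo_sub_one_iff (hn : 0 < n) {w : Equiv.Perm (Fin (n + 1))} :
    w ∈ increasingUpTo (n + 1) (n - 1) ↔ w = cycleIcc (w (last n)) (last n) := by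
  have hS : {i : Fin n | (i : ℕ) ≤ n - 1} = Set.univ := Set.eq_univ_of_forall fun i => by
    simp only [Set.mem_ofPred_eq]; omega
  rw [mem_increasingUpTo, strictMonoOn_castSucc_iff (by omega), hS, strictMonoOn_univ]
  constructor
  · intro hw
    have hrange : Set.range (w ∘ castSucc) = Set.range (w (last n)).succAbove := by
      rw [range_succAbove, ← succAbove_last, Set.range_comp, range_succAbove,
        Set.image_compl_eq w.bijective, Set.image_singleton]
    have hcomp := (hw.range_inj (strictMono_succAbove _)).1 hrange
    ext i
    induction i using lastCases with
    | last => rw [cycleIcc_last_apply_last]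
    | cast i => rw [cycleIcc_last_apply_castSucc, ← hcomp, Function.comp_apply]
  · intro hw
    rw [hw]
    convert strictMono_succAbove (w (last n)) using 1
    exact funext (cycleIcc_last_apply_castSucc _)

lemma xA_sub_one (hn : 0 < n) :
    xA (n + 1) (n - 1) = ∑ m : Fin (n + 1), single (cycleIcc m (last n)) 1 := by
  rw [xA_eq_sum]
  refine (sum_nbij' (fun m => cycleIcc m (last n)) (fun w => w (last n)) (fun m _ => ?_)
    (fun _ _ => mem_univ _) (fun m _ => cycleIcc_last_apply_last m)
    (fun w hw => ((mem_increasingUpTo_sub_one_iff hn).1 hw).symm) fun _ _ => rfl).symm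
  rw [mem_increasingUpTo_sub_one_iff hn, cycleIcc_last_apply_last]

lemma sum_mul_cycleIcc_of_lt {j : ℕ} {m : Fin (n + 1)} (hm : j < m) :
    ∑ u ∈ increasingUpTo (n + 1) j, single (u * cycleIcc m (last n)) (1 : ℚ) =
      xA (n + 1) j := by
  have hfix : ∀ u : Equiv.Perm (Fin (n + 1)),
      Set.EqOn (u * cycleIcc m (last n)) u {i | (i : ℕ) ≤ j} := fun u i hi => by
    rw [Equiv.Perm.mul_apply, cycleIcc_of_lt (lt_def.2 (lt_of_le_of_lt hi hm))]
  rw [xA_eq_sum]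
  refine sum_equiv (Equiv.mulRight (cycleIcc m (last n))) (fun u => ?_) fun _ _ => rfl
  rw [mem_increasingUpTo, mem_increasingUpTo, Equiv.coe_mulRight]
  exact ⟨fun hu => hu.congr (hfix u).symm, fun hu => hu.congr (hfix u)⟩

lemma mem_increasingUpTo_succ_iff {j : ℕ} (hj : j < n) {m : Fin (n + 1)}
    (hm : (m : ℕ) ≤ j + 1) {u : Equiv.Perm (Fin (n + 1))} :
    u ∈ increasingUpTo (n + 1) (j + 1) ↔
      u * cycleIcc m (last n) ∈ increasingUpTo (n + 1) j ∧
        IsInsertionPoint j ⇑(u * cycleIcc m (last n)) m := by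
  rw [mem_increasingUpTo, mem_increasingUpTo, Equiv.Perm.coe_mul]
  exact strictMonoOn_iff_comp_cycleIcc hj hm

lemma sum_product_mul_cycleIcc {j : ℕ} (hj : j < n) :
    ∑ p ∈ increasingUpTo (n + 1) (j + 1) ×ˢ
        ({m | (m : ℕ) ≤ j + 1} : Finset (Fin (n + 1))),
      single (p.1 * cycleIcc p.2 (last n)) (1 : ℚ) = xA (n + 1) j := by
  rw [xA_eq_sum]
  refine sum_bij (fun p _ => p.1 * cycleIcc p.2 (last n)) ?_ ?_ ?_ fun _ _ => rfl
  · rintro ⟨u, m⟩ hp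
    rw [mem_product, mem_filter] at hp
    exact ((mem_increasingUpTo_succ_iff hj hp.2.2).1 hp.1).1
  · rintro ⟨u, m⟩ hp ⟨u', m'⟩ hp' h
    rw [mem_product, mem_filter] at hp hp'
    have hins := ((mem_increasingUpTo_succ_iff hj hp.2.2).1 hp.1).2
    have hins' := ((mem_increasingUpTo_succ_iff hj hp'.2.2).1 hp'.1).2
    dsimp only at h hins hins'
    rw [← h] at hins'
    obtain rfl : m = m' := le_antisymm (hins.le hins' hp.2.2) (hins'.le hins hp'.2.2)
    exact Prod.ext (mul_right_cancel h) rfl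
  · intro w hw
    obtain ⟨m, hm, hins⟩ :=
      exists_isInsertionPoint hj w.injective (mem_increasingUpTo.1 hw)
    refine ⟨(w * (cycleIcc m (last n))⁻¹, m), ?_, inv_mul_cancel_right w _⟩
    rw [mem_product, mem_filter, mem_increasingUpTo_succ_iff hj hm, inv_mul_cancel_right]
    exact ⟨⟨hw, hins⟩, mem_univ m, hm⟩

lemma card_filter_not_val_le {j : ℕ} (hj : j ≤ n) :
    #{m : Fin (n + 1) | ¬ (m : ℕ) ≤ j} = n - j := by
  have : ({m | ¬ (m : ℕ) ≤ j} : Finset (Fin (n + 1))) = Ioi ⟨j, by omega⟩ := by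
    ext m
    simp [lt_def]
  rw [this, card_Ioi]
  simp

lemma xA_mul_xA_sub_one {j : ℕ} (hj : j < n) :
    xA (n + 1) (j + 1) * xA (n + 1) (n - 1) =
      xA (n + 1) j + (n - (j + 1)) • xA (n + 1) (j + 1) := by
  calc xA (n + 1) (j + 1) * xA (n + 1) (n - 1)
      = ∑ u ∈ increasingUpTo (n + 1) (j + 1), ∑ m : Fin (n + 1),
          single (u * cycleIcc m (last n)) (1 : ℚ) := by
        simp_rw [xA_sub_one (by omega : 0 < n), xA_eq_sum (n + 1) (j + 1), sum_mul_sum,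
          single_mul_single, one_mul]
    _ = ∑ p ∈ increasingUpTo (n + 1) (j + 1) ×ˢ
            ({m | (m : ℕ) ≤ j + 1} : Finset (Fin (n + 1))),
          single (p.1 * cycleIcc p.2 (last n)) (1 : ℚ)
        + ∑ m ∈ ({m | ¬ (m : ℕ) ≤ j + 1} : Finset (Fin (n + 1))),
          ∑ u ∈ increasingUpTo (n + 1) (j + 1), single (u * cycleIcc m (last n)) 1 := by
        rw [sum_product, sum_comm (γ := Fin (n + 1)), ← sum_add_distrib]
        exact sum_congr rfl fun u _ => (sum_filter_add_sum_filter_not _ _ _).symm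
    _ = xA (n + 1) j + (n - (j + 1)) • xA (n + 1) (j + 1) := by
        rw [sum_product_mul_cycleIcc hj, sum_congr rfl fun m hm => sum_mul_cycleIcc_of_lt ?_,
          Finset.sum_const, card_filter_not_val_le hj]
        simpa using hm

end

theorem xA_eq_fallingFactorial_general (n k : ℕ) (hk : k ≤ n) :
    xA (n + 1) (n - k) =
      ((List.range k).map
        (fun i => xA (n + 1) (n - 1)
          - (i : MonoidAlgebra ℚ (Equiv.Perm (Fin (n + 1)))))).prod := by
  -- the cast in the statement elaborates as a monadic lift of `List.range k`
  simp only [bind_pure_comp, List.map_eq_map, List.map_map, Function.comp_def]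
  induction k with
  | zero => simpa using xA_self
  | succ k ih =>
    have hj : n - k = n - (k + 1) + 1 := by omega
    have hkj : n - (n - (k + 1) + 1) = k := by omega
    rw [List.range_succ, List.map_append, List.prod_append, ← ih (by omega), hj,
      List.map_singleton, List.prod_singleton, mul_sub, xA_mul_xA_sub_one (by omega), hkj,
      ← nsmul_eq_mul', add_sub_cancel_right]

/-- In `ℚ[S_{n+1}]`, for `0 ≤ k ≤ n`: `x_{n-k} = ∏_{i=0}^{k-1} (x_{n-1} - i)`,
the falling factorial of `x_{n-1}`, where the integer `i` is identified with
`i` times the identity of the group algebra.  (The product is taken as an ordered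
list product since the group algebra is noncommutative, but all factors commute.) -/
theorem xA_eq_fallingFactorial (n k : ℕ) (hn : 1 ≤ n) (hk : k ≤ n) :
    xA (n + 1) (n - k) =
      ((List.range k).map
        (fun i => xA (n + 1) (n - 1)
          - (i : MonoidAlgebra ℚ (Equiv.Perm (Fin (n + 1)))))).prod :=
  xA_eq_fallingFactorial_general n k hk
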